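/- A k-ideal I of a commutative semiring R is k-strongly irreducible if and only if for all a, b ∈ R, C_k(⟨a⟩) ∩ C_k(⟨b⟩) ⊆ I implies a ∈ I or b ∈ I, where ⟨a⟩ denotes the principal ideal generated by a. -/

import Mathlib

variable {R : Type*} [CommSemiring R]

/-- An ideal `I` of a commutative semiring is a *k-ideal* (subtractive ideal) if
`a ∈ I` and `a + b ∈ I` imply `b ∈ I`. -/
def IsKIdeal (I : Ideal R) : Prop :=
  ∀ a b : R, a ∈ I → a + b ∈ I → b ∈ I

/-- The *k-closure* of an ideal `I` of a commutative semiring: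
the ideal `{r | r + x ∈ I for some x ∈ I}`. -/
def kClosure (I : Ideal R) : Ideal R where
  carrier := {r : R | ∃ x ∈ I, r + x ∈ I}
  zero_mem' := ⟨0, I.zero_mem, by simpa using I.zero_mem⟩
  add_mem' := by
    rintro a b ⟨x, hx, hax⟩ ⟨y, hy, hby⟩
    exact ⟨x + y, I.add_mem hx hy, by
      have h : a + b + (x + y) = (a + x) + (b + y) := by ring
      rw [h]; exact I.add_mem hax hby⟩
  smul_mem' := by
    rintro c a ⟨x, hx, hax⟩
    exact ⟨c * x, I.mul_mem_left c hx, by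
      have h : c • a + c * x = c * (a + x) := by rw [smul_eq_mul, mul_add]
      rw [h]; exact I.mul_mem_left c hax⟩

/-- A *k-strongly irreducible* ideal: a k-ideal `I` such that for all k-ideals `J`, `K`,
`J ⊓ K ≤ I` implies `J ≤ I` or `K ≤ I`. -/
def IsKStronglyIrreducible (I : Ideal R) : Prop :=
  IsKIdeal I ∧ ∀ J K : Ideal R, IsKIdeal J → IsKIdeal K → J ⊓ K ≤ I → J ≤ I ∨ K ≤ I

/-! `kClosure (Ideal.span {a})` is the smallest k-ideal containing `a`, so every k-ideal `J ⊄ I`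
contains one of these with `a ∉ I`, and the condition on k-ideals reduces to the principal ones. -/

lemma le_kClosure (J : Ideal R) : J ≤ kClosure J :=
  fun r hr => ⟨0, J.zero_mem, by rwa [add_zero]⟩

lemma isKIdeal_kClosure (J : Ideal R) : IsKIdeal (kClosure J) := by
  rintro a b ⟨x, hx, hax⟩ ⟨y, hy, haby⟩
  refine ⟨a + x + y, J.add_mem hax hy, ?_⟩
  have h : b + (a + x + y) = (a + b + y) + x := by ring
  rw [h]
  exact J.add_mem haby hx

lemma kClosure_le {J K : Ideal R} (hK : IsKIdeal K) (h : J ≤ K) : kClosure J ≤ K := by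
  rintro r ⟨x, hx, hrx⟩
  exact hK x r (h hx) (by rw [add_comm]; exact h hrx)

lemma mem_kClosure_span_singleton_self (a : R) : a ∈ kClosure (Ideal.span {a}) :=
  le_kClosure _ (Ideal.mem_span_singleton_self a)

lemma kClosure_span_singleton_le {J : Ideal R} {a : R} (hJ : IsKIdeal J) (ha : a ∈ J) :
    kClosure (Ideal.span {a}) ≤ J :=
  kClosure_le hJ (Ideal.span_singleton_le_iff_mem J |>.mpr ha)

/-- A k-ideal `I` is k-strongly irreducible if and only if for all `a b : R`,
`C_k(⟨a⟩) ⊓ C_k(⟨b⟩) ⊆ I` implies `a ∈ I` or `b ∈ I`. -/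
theorem isKStronglyIrreducible_iff_principal (I : Ideal R) (hI : IsKIdeal I) :
    IsKStronglyIrreducible I ↔
      ∀ a b : R, kClosure (Ideal.span {a}) ⊓ kClosure (Ideal.span {b}) ≤ I →
        a ∈ I ∨ b ∈ I := by
  constructor
  · rintro ⟨-, hirr⟩ a b hab
    exact (hirr _ _ (isKIdeal_kClosure _) (isKIdeal_kClosure _) hab).imp
      (· (mem_kClosure_span_singleton_self a)) (· (mem_kClosure_span_singleton_self b))
  · refine fun h => ⟨hI, fun J K hJ hK hJK => ?_⟩
    by_contra! hc
    obtain ⟨a, haJ, haI⟩ := SetLike.not_le_iff_exists.mp hc.1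
    obtain ⟨b, hbK, hbI⟩ := SetLike.not_le_iff_exists.mp hc.2
    have hab : kClosure (Ideal.span {a}) ⊓ kClosure (Ideal.span {b}) ≤ I :=
      (inf_le_inf (kClosure_span_singleton_le hJ haJ) (kClosure_span_singleton_le hK hbK)).trans
        hJK
    exact (h a b hab).elim haI hbI
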